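/- Let X be a Banach space and f : X → ℝ ∪ {+∞} convex lower semicontinuous with x̄ ∈ [f ≤ 0]. Then the following are equivalent: (i) there exist τ > 0, δ > 0 with τ d(x, [f ≤ 0]) ≤ f₊(x) for all x ∈ B_δ(x̄); (ii) liminf over x → x̄ with f(x) > 0 of d(0, ∂f(x)) is strictly positive. -/

import Mathlib

/-! If the error bound holds with constant `τ` near `x̄` and `g ∈ ∂f(x)` with `f x > 0`, testing the
subgradient inequality against the points of `[f ≤ 0]` gives `f x ≤ ‖g‖ d(x, [f ≤ 0])`, hence
`τ ≤ ‖g‖`. Conversely, if the bound fails at `x` with constant `τ`, Ekeland's variational principle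
applied to `f₊` gives a point `y` with `f y > 0`, closer to `x` than `[f ≤ 0]`, at which
`f₊ + τ‖· - y‖` is minimal. By convexity (moving from `y` towards a point where `f < 0` until `f`
vanishes), `f + τ‖· - y‖` is minimal at `y` as well, and a Hahn–Banach separation of the epigraph
of `f` from the open cone below `f y - τ‖· - y‖` produces `g ∈ ∂f(y)` with `‖g‖ ≤ τ`. -/

open EMetric ENNReal

/-- Convexity for an `EReal`-valued function (modelling `f : X → ℝ ∪ {+∞}`). -/
def EConvexOn {X : Type*} [NormedAddCommGroup X] [NormedSpace ℝ X]
    (f : X → EReal) : Prop :=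
  ∀ u v : X, ∀ t : ℝ, 0 ≤ t → t ≤ 1 →
    f (t • u + (1 - t) • v) ≤ (t : EReal) * f u + ((1 - t : ℝ) : EReal) * f v

/-- The (convex) subdifferential of `f` at `x`. -/
def ESubdiff {X : Type*} [NormedAddCommGroup X] [NormedSpace ℝ X]
    (f : X → EReal) (x : X) : Set (X →L[ℝ] ℝ) :=
  {g | ∀ u : X, ((g (u - x) : ℝ) : EReal) ≤ f u - f x}

/-- The "positive part" of an extended real, as an element of `[0, +∞]`. -/
noncomputable def EReal.toENN (a : EReal) : ℝ≥0∞ :=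
  if a = ⊤ then ⊤ else ENNReal.ofReal a.toReal

/-- `d(0, ∂f(x)) = inf {‖x*‖ : x* ∈ ∂f(x)}`, `+∞` if `∂f(x) = ∅`. -/
noncomputable def dSub {X : Type*} [NormedAddCommGroup X] [NormedSpace ℝ X]
    (f : X → EReal) (x : X) : ℝ≥0∞ :=
  ⨅ g ∈ ESubdiff f x, ENNReal.ofReal ‖g‖

open Filter

theorem EReal.toENN_eq_toENNReal (a : EReal) : a.toENN = a.toENNReal := rfl

theorem le_mul_infEDist {α : Type*} [PseudoEMetricSpace α] {x : α} {s : Set α} {a c : ℝ≥0∞}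
    (hs : s.Nonempty) (hc : c ≠ ⊤) (h : ∀ u ∈ s, a ≤ c * edist x u) :
    a ≤ c * Metric.infEDist x s := by
  rcases eq_or_ne c 0 with rfl | hc₀
  · obtain ⟨u, hu⟩ := hs
    simpa using h u hu
  · rw [Metric.infEDist, ENNReal.mul_iInf_of_ne hc₀ hc]
    refine le_iInf fun u => ?_
    rw [ENNReal.mul_iInf_of_ne hc₀ hc]
    exact le_iInf (h u)

theorem Set.Nonempty.exists_forall_le_add {ι : Type*} {s : Set ι} (hs : s.Nonempty)
    (F : ι → ℝ≥0∞) {ε : ℝ≥0∞} (hε : ε ≠ 0) : ∃ a ∈ s, ∀ b ∈ s, F a ≤ F b + ε := by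
  by_cases htop : ⨅ b ∈ s, F b = ⊤
  · obtain ⟨a, ha⟩ := hs
    refine ⟨a, ha, fun b hb => ?_⟩
    have hb' : F b = ⊤ := top_le_iff.1 (htop.symm.le.trans (iInf₂_le b hb))
    simp [hb']
  · obtain ⟨a, ha, hlt⟩ : ∃ a ∈ s, F a < (⨅ b ∈ s, F b) + ε := by
      simpa only [iInf_lt_iff, exists_prop] using ENNReal.lt_add_right htop hε
    exact ⟨a, ha, fun b hb => hlt.le.trans (add_le_add_left (iInf₂_le b hb) ε)⟩

section Ekeland

variable {X : Type*} [EMetricSpace X] {F : X → ℝ≥0∞} {σ : ℝ≥0∞} {w z : X}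

def ekelandSet (F : X → ℝ≥0∞) (σ : ℝ≥0∞) (w : X) : Set X :=
  {z | F z + σ * edist z w ≤ F w}

theorem self_mem_ekelandSet (F : X → ℝ≥0∞) (σ : ℝ≥0∞) (w : X) : w ∈ ekelandSet F σ w := by
  simp [ekelandSet]

theorem apply_le_of_mem_ekelandSet (hz : z ∈ ekelandSet F σ w) : F z ≤ F w :=
  le_self_add.trans hz

theorem ekelandSet_subset (hz : z ∈ ekelandSet F σ w) : ekelandSet F σ z ⊆ ekelandSet F σ w :=
  fun p hp => calc
    F p + σ * edist p w ≤ F p + σ * edist p z + σ * edist z w := by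
      rw [add_assoc, ← mul_add]
      gcongr
      exact edist_triangle p z w
    _ ≤ F z + σ * edist z w := by gcongr; exact hp
    _ ≤ F w := hz

theorem isClosed_ekelandSet (hF : LowerSemicontinuous F) (hσ : σ ≠ ⊤) (w : X) :
    IsClosed (ekelandSet F σ w) :=
  (hF.add ((ENNReal.continuous_const_mul hσ).comp
    (continuous_id.edist continuous_const)).lowerSemicontinuous).isClosed_preimage (F w)

theorem mul_edist_le_of_mem_ekelandSet (hz : z ∈ ekelandSet F σ w) (hFz : F z ≠ ⊤) {ε : ℝ≥0∞}
    (hw : F w ≤ F z + ε) : σ * edist z w ≤ ε :=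
  (ENNReal.add_le_add_iff_left hFz).1 (hz.trans hw)

theorem ekeland_variational_principle [CompleteSpace X] (hF : LowerSemicontinuous F)
    (hσ₀ : σ ≠ 0) (hσ : σ ≠ ⊤) {x : X} (hx : F x ≠ ⊤) :
    ∃ y ∈ ekelandSet F σ x, ∀ z, F y ≤ F z + σ * edist z y := by
  -- `next w n` minimises `F` on `ekelandSet F σ w` up to `σ 2⁻ⁿ`, which confines
  -- `ekelandSet F σ (next w n)` to the closed ball of radius `2⁻ⁿ` around `next w n`
  choose next hnext_mem hnext_le using fun (w : X) (n : ℕ) =>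
    Set.Nonempty.exists_forall_le_add ⟨w, self_mem_ekelandSet F σ w⟩ F
      (mul_ne_zero hσ₀ (pow_ne_zero n (ENNReal.inv_ne_zero.2 ofNat_ne_top)) : σ * 2⁻¹ ^ n ≠ 0)
  let u : ℕ → X := fun n => Nat.rec x (fun n w => next w n) n
  have hanti : Antitone fun n => ekelandSet F σ (u n) :=
    antitone_nat_of_succ_le fun n => ekelandSet_subset (hnext_mem (u n) n)
  have hrad : ∀ n, ∀ z ∈ ekelandSet F σ (u (n + 1)), edist z (u (n + 1)) ≤ 2⁻¹ ^ n := by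
    intro n z hz
    have hz' : z ∈ ekelandSet F σ (u n) := hanti n.le_succ hz
    have hFz : F z ≠ ⊤ :=
      ne_top_of_le_ne_top hx (apply_le_of_mem_ekelandSet (hanti n.zero_le hz'))
    exact (ENNReal.mul_le_mul_iff_right hσ₀ hσ).1
      (mul_edist_le_of_mem_ekelandSet hz hFz (hnext_le (u n) n z hz'))
  have hcauchy : CauchySeq fun n => u (n + 1) := by
    refine cauchySeq_of_edist_le_geometric_two 1 one_ne_top fun n => ?_
    rw [edist_comm, one_div, ENNReal.inv_pow]
    exact hrad n _ (hnext_mem _ _)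
  obtain ⟨y, hy⟩ := cauchySeq_tendsto_of_complete hcauchy
  have hyS : ∀ n, y ∈ ekelandSet F σ (u n) := fun n =>
    (isClosed_ekelandSet hF hσ _).mem_of_tendsto hy
      (eventually_atTop.2 ⟨n, fun m hm => hanti hm (hnext_mem _ _)⟩)
  refine ⟨y, hyS 0, fun z => ?_⟩
  by_contra! hlt
  have hzy : Tendsto (fun n => u (n + 1)) atTop (nhds z) := by
    refine tendsto_iff_edist_tendsto_0.2 (tendsto_of_tendsto_of_tendsto_of_le_of_le
      tendsto_const_nhds
      (ENNReal.tendsto_pow_atTop_nhds_zero_of_lt_one (ENNReal.inv_lt_one.2 one_lt_two))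
      (fun _ => zero_le) fun n => ?_)
    rw [edist_comm]
    exact hrad n z (ekelandSet_subset (hyS (n + 1)) hlt.le)
  obtain rfl := tendsto_nhds_unique hzy hy
  simp at hlt

end Ekeland

section Convex

variable {X : Type*} [NormedAddCommGroup X] [NormedSpace ℝ X] {f : X → EReal}

theorem EConvexOn.apply_le (hf : EConvexOn f) {u v : X} {a b t : ℝ} (ht₀ : 0 ≤ t) (ht₁ : t ≤ 1)
    (hu : f u ≤ a) (hv : f v ≤ b) : f (t • u + (1 - t) • v) ≤ ↑(t * a + (1 - t) * b) := by
  refine (hf u v t ht₀ ht₁).trans ?_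
  push_cast
  gcongr
  exact mod_cast sub_nonneg.2 ht₁

theorem EConvexOn.convex_epigraph (hf : EConvexOn f) : Convex ℝ {p : X × ℝ | f p.1 ≤ p.2} := by
  rintro ⟨u, a⟩ hu ⟨v, b⟩ hv t s ht hs hts
  obtain rfl : s = 1 - t := by linarith
  exact hf.apply_le ht (by linarith) hu hv

theorem ne_top_of_mem_ESubdiff {x : X} {g : X →L[ℝ] ℝ} (hg : g ∈ ESubdiff f x) : f x ≠ ⊤ := by
  intro h
  simpa [h] using hg x

theorem mem_ESubdiff_of_forall_le {y : X} {c : ℝ} (hc : f y = c) {g : X →L[ℝ] ℝ}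
    (h : ∀ z (t : ℝ), f z ≤ t → g (z - y) + c ≤ t) : g ∈ ESubdiff f y := fun z => by
  rw [hc, EReal.le_sub_iff_add_le (.inl (EReal.coe_ne_bot c)) (.inl (EReal.coe_ne_top c))]
  exact EReal.le_of_forall_lt_iff_le.1 fun t ht => mod_cast h z t ht.le

theorem ContinuousLinearMap.norm_le_of_forall_apply_le {g : X →L[ℝ] ℝ} {σ : ℝ} (hσ : 0 ≤ σ)
    (h : ∀ w, g w ≤ σ * ‖w‖) : ‖g‖ ≤ σ := by
  refine g.opNorm_le_bound hσ fun w => abs_le.2 ⟨?_, h w⟩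
  have := h (-w)
  rw [map_neg, norm_neg] at this
  linarith

theorem convex_setOf_add_mul_norm_sub_lt {σ : ℝ} (hσ : 0 ≤ σ) (y : X) (c : ℝ) :
    Convex ℝ {p : X × ℝ | p.2 + σ * ‖p.1 - y‖ < c} := by
  have hnorm : ConvexOn ℝ Set.univ fun p : X × ℝ => ‖p.1 - y‖ := by
    refine ⟨convex_univ, fun p _ q _ a b ha hb hab => ?_⟩
    calc ‖(a • p + b • q).1 - y‖ = ‖a • (p.1 - y) + b • (q.1 - y)‖ := by
          rw [smul_sub, smul_sub, sub_add_sub_comm, ← add_smul, hab, one_smul]; rfl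
      _ ≤ a * ‖p.1 - y‖ + b * ‖q.1 - y‖ := by
          refine (norm_add_le _ _).trans ?_
          rw [norm_smul, norm_smul, Real.norm_of_nonneg ha, Real.norm_of_nonneg hb]
  simpa using (((LinearMap.snd ℝ X ℝ).convexOn convex_univ).add (hnorm.smul hσ)).convex_lt c

theorem EConvexOn.exists_mem_ESubdiff_norm_le (hf : EConvexOn f) {y : X} {c σ : ℝ}
    (hσ : 0 ≤ σ) (hc : f y = c) (hmin : ∀ z (t : ℝ), f z ≤ t → c ≤ t + σ * ‖z - y‖) :
    ∃ g ∈ ESubdiff f y, ‖g‖ ≤ σ := by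
  have hB : IsOpen {p : X × ℝ | p.2 + σ * ‖p.1 - y‖ < c} :=
    isOpen_lt (by fun_prop) continuous_const
  have hdisj : Disjoint {p : X × ℝ | p.2 + σ * ‖p.1 - y‖ < c} {p | f p.1 ≤ p.2} :=
    Set.disjoint_left.2 fun p hpB hpC => (hmin p.1 p.2 hpC).not_gt hpB
  obtain ⟨φ, u, hφB, hφC⟩ := geometric_hahn_banach_open
    (convex_setOf_add_mul_norm_sub_lt hσ y c) hB hf.convex_epigraph hdisj
  set L : X →L[ℝ] ℝ := φ.comp (ContinuousLinearMap.inl ℝ X ℝ)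
  set α : ℝ := φ (0, 1)
  have hφ : ∀ z t, φ (z, t) = L z + α * t := fun z t => by
    rw [show ((z, t) : X × ℝ) = (z, 0) + t • (0, 1) by simp, map_add, map_smul]
    simp [L, α, mul_comm]
  have hBφ : ∀ z t, t + σ * ‖z - y‖ < c → L z + α * t < u := fun z t h => hφ z t ▸ hφB (z, t) h
  have hCφ : ∀ z (t : ℝ), f z ≤ t → u ≤ L z + α * t := fun z t h => hφ z t ▸ hφC (z, t) h
  have hα : 0 < α := by
    have h₁ := hBφ y (c - 1) (by simp)
    have h₂ := hCφ y c hc.le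
    linarith
  have hBφ' : ∀ z, L z + α * (c - σ * ‖z - y‖) ≤ u := fun z =>
    le_of_forall_pos_lt_add fun ε hε => by
      have := hBφ z (c - σ * ‖z - y‖ - ε / α) (by linarith [div_pos hε hα])
      rw [mul_sub, mul_div_cancel₀ _ hα.ne'] at this
      linarith
  have hu : u = L y + α * c := le_antisymm (hCφ y c hc.le) (by simpa using hBφ' y)
  have hg : ∀ w, (-α⁻¹ • L) w = -L w / α := fun w => by
    rw [smul_apply, smul_eq_mul, neg_mul, inv_mul_eq_div, neg_div]
  refine ⟨-α⁻¹ • L, mem_ESubdiff_of_forall_le hc fun z t hzt => ?_,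
    ContinuousLinearMap.norm_le_of_forall_apply_le hσ fun w => ?_⟩
  · have h := hCφ z t hzt
    rw [hg, map_sub, div_add' _ _ _ hα.ne', div_le_iff₀ hα]
    linarith
  · have h := hBφ' (y - w)
    rw [hu, map_sub, sub_sub_cancel_left, norm_neg] at h
    rw [hg, div_le_iff₀ hα]
    linarith

theorem EConvexOn.le_add_mul_norm_of_toENNReal_le (hf : EConvexOn f) {y : X} {c σ : ℝ}
    (hσ : 0 ≤ σ) (hc₀ : 0 < c) (hc : f y = c)
    (hmin : ∀ z, (f y).toENNReal ≤ (f z).toENNReal + ENNReal.ofReal σ * edist z y)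
    (z : X) (t : ℝ) (hzt : f z ≤ t) : c ≤ t + σ * ‖z - y‖ := by
  have hseg : ∀ s : ℝ, 0 ≤ s → s ≤ 1 → ENNReal.ofReal c ≤
      ENNReal.ofReal (s * t + (1 - s) * c) + ENNReal.ofReal (σ * (s * ‖z - y‖)) := by
    intro s hs₀ hs₁
    have hfw := EReal.toENNReal_le_toENNReal (hf.apply_le hs₀ hs₁ hzt hc.le)
    have hdist : edist (s • z + (1 - s) • y) y = ENNReal.ofReal (s * ‖z - y‖) := by
      rw [edist_dist, dist_eq_norm, show s • z + (1 - s) • y - y = s • (z - y) by module,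
        norm_smul, Real.norm_of_nonneg hs₀]
    have h := (hmin (s • z + (1 - s) • y)).trans (add_le_add_left hfw _)
    rwa [hc, hdist, EReal.real_coe_toENNReal, EReal.real_coe_toENNReal,
      ← ENNReal.ofReal_mul hσ] at h
  rcases le_or_gt 0 t with ht | ht
  · have h := hseg 1 zero_le_one le_rfl
    rw [sub_self, zero_mul, add_zero, one_mul, one_mul,
      ← ENNReal.ofReal_add ht (by positivity)] at h
    exact (ENNReal.ofReal_le_ofReal_iff (by positivity)).1 h
  · -- `f` is nonpositive at the point of the segment `[y, z]` with parameter `c / (c - t)`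
    have hct : 0 < c - t := by linarith
    have h := hseg (c / (c - t)) (by positivity) ((div_le_one hct).2 (by linarith))
    rw [show c / (c - t) * t + (1 - c / (c - t)) * c = 0 by field_simp; ring,
      ENNReal.ofReal_zero, zero_add, ENNReal.ofReal_le_ofReal_iff (by positivity),
      ← mul_assoc, mul_div_assoc', div_mul_eq_mul_div, le_div_iff₀ hct] at h
    nlinarith

end Convex

section ErrorBound

variable {X : Type*} [NormedAddCommGroup X] [NormedSpace ℝ X] {f : X → EReal}

theorem toENNReal_le_mul_edist_of_mem_ESubdiff {x u : X} {g : X →L[ℝ] ℝ}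
    (hg : g ∈ ESubdiff f x) (hu : f u ≤ 0) :
    (f x).toENNReal ≤ ENNReal.ofReal ‖g‖ * edist x u := by
  rcases le_or_gt (f x) 0 with hfx | hfx
  · simp [EReal.toENNReal_of_nonpos hfx]
  obtain ⟨r, hr⟩ : ∃ r : ℝ, f x = r :=
    ⟨_, (EReal.coe_toReal (ne_top_of_mem_ESubdiff hg) (ne_bot_of_gt hfx)).symm⟩
  have h := (hg u).trans (EReal.sub_le_sub hu le_rfl)
  rw [hr, zero_sub, ← EReal.coe_neg, EReal.coe_le_coe_iff] at h
  have : r ≤ ‖g‖ * dist x u := calc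
    r ≤ g (x - u) := by rw [← neg_sub, map_neg]; linarith
    _ ≤ ‖g‖ * dist x u := (Real.le_norm_self _).trans (dist_eq_norm x u ▸ g.le_opNorm _)
  rw [hr, EReal.real_coe_toENNReal, edist_dist, ← ENNReal.ofReal_mul (norm_nonneg g)]
  exact ENNReal.ofReal_le_ofReal this

theorem le_norm_of_mem_ESubdiff {x x₀ : X} (hx₀ : f x₀ ≤ 0) (hfx : 0 < f x) {τ : ℝ}
    (hτ : ENNReal.ofReal τ * Metric.infEDist x {u | f u ≤ 0} ≤ (f x).toENNReal)
    {g : X →L[ℝ] ℝ} (hg : g ∈ ESubdiff f x) : τ ≤ ‖g‖ := by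
  have hd : (f x).toENNReal ≤ ENNReal.ofReal ‖g‖ * Metric.infEDist x {u | f u ≤ 0} :=
    le_mul_infEDist ⟨x₀, hx₀⟩ ENNReal.ofReal_ne_top fun _ hu =>
      toENNReal_le_mul_edist_of_mem_ESubdiff hg hu
  have hd₀ : Metric.infEDist x {u | f u ≤ 0} ≠ 0 := by
    intro h
    rw [h, mul_zero, nonpos_iff_eq_zero] at hd
    exact EReal.toENNReal_ne_zero_iff.2 hfx hd
  have hd_top : Metric.infEDist x {u | f u ≤ 0} ≠ ⊤ :=
    ne_top_of_le_ne_top (edist_ne_top x x₀) (Metric.infEDist_le_edist_of_mem hx₀)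
  exact (ENNReal.ofReal_le_ofReal_iff (norm_nonneg g)).1
    ((ENNReal.mul_le_mul_iff_left hd₀ hd_top).1 (hτ.trans hd))

theorem EConvexOn.exists_mem_ESubdiff_norm_le_of_lt_mul_infEDist [CompleteSpace X]
    (hf : EConvexOn f) (hlsc : LowerSemicontinuous f) {τ : ℝ} (hτ : 0 < τ) {x : X}
    (hx : (f x).toENNReal < ENNReal.ofReal τ * Metric.infEDist x {u | f u ≤ 0}) :
    ∃ y, 0 < f y ∧ edist y x < Metric.infEDist x {u | f u ≤ 0} ∧
      ∃ g ∈ ESubdiff f y, ‖g‖ ≤ τ := by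
  have hF : LowerSemicontinuous fun z => (f z).toENNReal :=
    EReal.continuous_toENNReal.comp_lowerSemicontinuous hlsc
      fun _ _ => EReal.toENNReal_le_toENNReal
  have hτ₀ : ENNReal.ofReal τ ≠ 0 := (ENNReal.ofReal_pos.2 hτ).ne'
  obtain ⟨y, hyx, hmin⟩ :=
    ekeland_variational_principle hF hτ₀ ENNReal.ofReal_ne_top hx.ne_top
  have hyx' : edist y x < Metric.infEDist x {u | f u ≤ 0} :=
    (ENNReal.mul_lt_mul_iff_right hτ₀ ENNReal.ofReal_ne_top).1
      ((le_add_self.trans hyx).trans_lt hx)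
  have hfy : 0 < f y := by
    by_contra! h
    exact (Metric.infEDist_le_edist_of_mem (x := x) h).not_gt (by rwa [edist_comm])
  have hfy_top : f y ≠ ⊤ := EReal.toENNReal_ne_top_iff.1 <| ne_top_of_le_ne_top hx.ne_top
    (apply_le_of_mem_ekelandSet (F := fun z => (f z).toENNReal) hyx)
  obtain ⟨c, hc⟩ : ∃ c : ℝ, f y = c :=
    ⟨_, (EReal.coe_toReal hfy_top (ne_bot_of_gt hfy)).symm⟩
  have hc₀ : 0 < c := EReal.coe_pos.1 (hc ▸ hfy)
  exact ⟨y, hfy, hyx', hf.exists_mem_ESubdiff_norm_le hτ.le hc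
    (hf.le_add_mul_norm_of_toENNReal_le hτ.le hc₀ hc hmin)⟩

end ErrorBound

theorem stmt_8_general {X : Type*} [NormedAddCommGroup X] [NormedSpace ℝ X] [CompleteSpace X]
    (f : X → EReal) (hconv : EConvexOn f)
    (hlsc : LowerSemicontinuous f)
    (xbar : X) (hxbar : f xbar ≤ 0) :
    (∃ τ δ : ℝ, 0 < τ ∧ 0 < δ ∧ ∀ x : X, dist x xbar < δ →
        ENNReal.ofReal τ * EMetric.infEdist x {u | f u ≤ 0} ≤ (f x).toENN) ↔
    0 < Filter.liminf (fun x => dSub f x) (nhdsWithin xbar {x | 0 < f x}) := by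
  simp only [EReal.toENN_eq_toENNReal]
  constructor
  · rintro ⟨τ, δ, hτ, hδ, hbound⟩
    refine (ENNReal.ofReal_pos.2 hτ).trans_le (le_liminf_of_le (by isBoundedDefault) ?_)
    filter_upwards [inter_mem_nhdsWithin _ (Metric.ball_mem_nhds xbar hδ)] with x ⟨hfx, hx⟩
    exact le_iInf₂ fun g hg =>
      ENNReal.ofReal_le_ofReal (le_norm_of_mem_ESubdiff hxbar hfx (hbound x hx) hg)
  · intro hpos
    obtain ⟨τ, -, hτ₀, hτ⟩ := ENNReal.lt_iff_exists_real_btwn.1 hpos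
    obtain ⟨δ, hδ, hball⟩ := Metric.eventually_nhds_iff.1
      (eventually_nhdsWithin_iff.1 (eventually_lt_of_lt_liminf hτ))
    refine ⟨τ, δ / 2, ENNReal.ofReal_pos.1 hτ₀, half_pos hδ, fun x hx => ?_⟩
    by_contra! hlt
    obtain ⟨y, hfy, hyx, g, hg, hgτ⟩ :=
      hconv.exists_mem_ESubdiff_norm_le_of_lt_mul_infEDist hlsc (ENNReal.ofReal_pos.1 hτ₀) hlt
    have hyx' : edist y x < edist x xbar := hyx.trans_le (Metric.infEDist_le_edist_of_mem hxbar)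
    rw [edist_dist, edist_dist, ENNReal.ofReal_lt_ofReal_iff_of_nonneg dist_nonneg] at hyx'
    have hy : dist y xbar < δ := by linarith [dist_triangle y x xbar]
    exact (hball hy hfy).not_ge (iInf₂_le_of_le g hg (ENNReal.ofReal_le_ofReal hgτ))

/-- for `f` convex lsc and `x̄ ∈ [f ≤ 0]`, a local linear error
bound holds at `x̄` iff `liminf_{x→x̄, f(x)>0} d(0,∂f(x)) > 0` (the latter
expressed as: some `τ > 0` bounds `d(0,∂f(x))` from below near `x̄`). -/
theorem stmt_8 {X : Type*} [NormedAddCommGroup X] [NormedSpace ℝ X] [CompleteSpace X]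
    (f : X → EReal) (hbot : ∀ u, f u ≠ ⊥) (hconv : EConvexOn f)
    (hlsc : LowerSemicontinuous f)
    (xbar : X) (hxbar : f xbar ≤ 0) :
    (∃ τ δ : ℝ, 0 < τ ∧ 0 < δ ∧ ∀ x : X, dist x xbar < δ →
        ENNReal.ofReal τ * EMetric.infEdist x {u | f u ≤ 0} ≤ (f x).toENN) ↔
    0 < Filter.liminf (fun x => dSub f x) (nhdsWithin xbar {x | 0 < f x}) :=
  stmt_8_general f hconv hlsc xbar hxbar
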